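/- arXiv:2112.07439 — 2 statements merged into one kernel-verified Lean document; each statement's English description precedes it below -/
import Mathlib

section
/- Let G be a connected finite simple graph and let L be a list-assignment for G such that |L(v)| ≥ deg_G(v) for every vertex v and |L(w)| > deg_G(w) for some vertex w. Then G is L-swappable. -/
/-!
Induction on `∑ v, #(L v)`. Take a vertex `w` with slack and at least two colors, delete its
edges and give it a single color: every vertex still reaches a vertex with slack, since the former
neighbours of `w` gained one, so the smaller instance is swappable. Its Kempe swaps lift to `G`.
If the corresponding chain in `G` meets `w`, either `w` has a spare color and is recolored out of
the way first, or counting shows that its list consists of its own color and the pairwise distinct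
colors of its neighbours; then `w` is a leaf of the chain, and the swap is still valid at `w`.
-/

open SimpleGraph
open scoped Classical

/-- `φ` is a proper coloring of `G` choosing colors from the lists `L`. -/
def IsLColoring {V : Type*} (G : SimpleGraph V) (L : V → Finset ℕ) (φ : V → ℕ) : Prop :=
  (∀ v, φ v ∈ L v) ∧ ∀ ⦃u w : V⦄, G.Adj u w → φ u ≠ φ w

/-- The subgraph of `G` induced by the vertices colored `α` or `β` under `φ`. -/
def kempeGraph {V : Type*} (G : SimpleGraph V) (φ : V → ℕ) (α β : ℕ) : SimpleGraph V where
  Adj u w := G.Adj u w ∧ (φ u = α ∨ φ u = β) ∧ (φ w = α ∨ φ w = β)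
  symm := ⟨fun u w h => ⟨h.1.symm, h.2.2, h.2.1⟩⟩
  loopless := ⟨fun u h => G.loopless.irrefl u h.1⟩

/-- The coloring obtained from `φ` by interchanging colors `α` and `β` on the
connected component, containing `x`, of the subgraph induced by the vertices
colored `α` or `β`. -/
noncomputable def kempeSwap {V : Type*} (G : SimpleGraph V) (φ : V → ℕ) (α β : ℕ)
    (x : V) : V → ℕ :=
  fun v =>
    if (kempeGraph G φ α β).Reachable x v ∧ φ v = α then β
    else if (kempeGraph G φ α β).Reachable x v ∧ φ v = β then α
    else φ v

/-- `ψ` is obtained from the `L`-coloring `φ` by a single `L`-valid Kempe swap. -/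
def KempeStep {V : Type*} (G : SimpleGraph V) (L : V → Finset ℕ) (φ ψ : V → ℕ) : Prop :=
  IsLColoring G L φ ∧ IsLColoring G L ψ ∧ ∃ α β x, ψ = kempeSwap G φ α β x

/-- Two colorings are `L`-equivalent if one can be obtained from the other by a
sequence of `L`-valid Kempe swaps. -/
def LEquiv {V : Type*} (G : SimpleGraph V) (L : V → Finset ℕ) :
    (V → ℕ) → (V → ℕ) → Prop :=
  Relation.ReflTransGen (KempeStep G L)

/-- `G` has an `L`-coloring and all of its `L`-colorings are pairwise `L`-equivalent. -/
def LSwappable {V : Type*} (G : SimpleGraph V) (L : V → Finset ℕ) : Prop :=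
  (∃ φ, IsLColoring G L φ) ∧
    ∀ φ ψ, IsLColoring G L φ → IsLColoring G L ψ → LEquiv G L φ ψ

/-- The degree of the vertex `v` in `G`. -/
noncomputable def gdeg {V : Type*} (G : SimpleGraph V) (v : V) : ℕ :=
  (G.neighborSet v).ncard

/-- `G` is `L`-swappable for every degree-assignment `L`. -/
def DegreeSwappable {V : Type*} (G : SimpleGraph V) : Prop :=
  ∀ L : V → Finset ℕ, (∀ v, (L v).card = gdeg G v) → LSwappable G L

/-- `G` has an `L`-coloring for every degree-assignment `L`. -/
def DegreeChoosable {V : Type*} (G : SimpleGraph V) : Prop :=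
  ∀ L : V → Finset ℕ, (∀ v, (L v).card = gdeg G v) → ∃ φ, IsLColoring G L φ

/-- `G` is `L`-swappable for every `k`-assignment `L`. -/
def KSwappable {V : Type*} (G : SimpleGraph V) (k : ℕ) : Prop :=
  ∀ L : V → Finset ℕ, (∀ v, (L v).card = k) → LSwappable G L

/-- `G` is `L`-swappable for every `f`-assignment `L`. -/
def FSwappable {V : Type*} (G : SimpleGraph V) (f : V → ℕ) : Prop :=
  ∀ L : V → Finset ℕ, (∀ v, (L v).card = f v) → LSwappable G L

namespace SimpleGraph

variable {V : Type*} {K : SimpleGraph V} {w x u : V}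

lemma eq_of_reachable_of_forall_not_adj (hw : ∀ z, ¬ K.Adj w z) (h : K.Reachable w u) :
    u = w := by
  obtain ⟨p⟩ := h
  cases p with
  | nil => rfl
  | cons hadj _ => exact absurd hadj (hw _)

lemma eq_of_reachable_deleteIncidenceSet (h : (K.deleteIncidenceSet w).Reachable w u) : u = w :=
  eq_of_reachable_of_forall_not_adj (fun _ hz => (deleteIncidenceSet_adj.mp hz).2.1 rfl) h

/-- Follow a walk from `x` until it first enters `w`. -/
lemma Reachable.deleteIncidenceSet_or_exists_adj (hx : x ≠ w) (h : K.Reachable x u) :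
    (K.deleteIncidenceSet w).Reachable x u ∨
      ∃ z, K.Adj w z ∧ (K.deleteIncidenceSet w).Reachable x z := by
  rw [reachable_iff_reflTransGen] at h
  induction h with
  | refl => exact Or.inl .rfl
  | @tail b c _ hbc ih =>
    refine ih.elim (fun hb => ?_) Or.inr
    have hbw : b ≠ w := fun hbw => hx (eq_of_reachable_deleteIncidenceSet (hbw ▸ hb.symm))
    by_cases hcw : c = w
    · exact Or.inr ⟨b, hcw ▸ hbc.symm, hb⟩
    · exact Or.inl (hb.trans (deleteIncidenceSet_adj.mpr ⟨hbc, hbw, hcw⟩).reachable)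

lemma Reachable.exists_adj_reachable_deleteIncidenceSet (hx : x ≠ w) (h : K.Reachable x w) :
    ∃ z, K.Adj w z ∧ (K.deleteIncidenceSet w).Reachable x z :=
  (h.deleteIncidenceSet_or_exists_adj hx).resolve_left fun hw =>
    hx (eq_of_reachable_deleteIncidenceSet hw.symm)

lemma Reachable.deleteIncidenceSet_of_not_reachable (h : K.Reachable x u)
    (hw : ¬ K.Reachable x w) : (K.deleteIncidenceSet w).Reachable x u :=
  (h.deleteIncidenceSet_or_exists_adj fun hxw => hw (by rw [hxw])).resolve_right
    fun ⟨_, hz, hxz⟩ => hw ((hxz.mono (deleteIncidenceSet_le K w)).trans hz.symm.reachable)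

/-- A vertex with at most one neighbour is never an inner vertex of a path. -/
lemma Reachable.deleteIncidenceSet_of_neighborSet_subsingleton (h : K.Reachable x u)
    (hx : x ≠ w) (hu : u ≠ w) (hw : (K.neighborSet w).Subsingleton) :
    (K.deleteIncidenceSet w).Reachable x u := by
  obtain hxu | ⟨z, hz, hxz⟩ := h.deleteIncidenceSet_or_exists_adj hx
  · exact hxu
  obtain hux | ⟨z', hz', huz'⟩ := h.symm.deleteIncidenceSet_or_exists_adj hu
  · exact hux.symm
  · exact hxz.trans ((hw hz hz') ▸ huz'.symm)

end SimpleGraph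

open Finset

section Degree

variable {V : Type*} {G : SimpleGraph V} {w u : V}

lemma gdeg_deleteIncidenceSet_self : gdeg (G.deleteIncidenceSet w) w = 0 := by
  simp [gdeg, neighborSet, deleteIncidenceSet_adj]

lemma gdeg_deleteIncidenceSet_le [Finite V] : gdeg (G.deleteIncidenceSet w) u ≤ gdeg G u :=
  Set.ncard_le_ncard fun _ hz => (deleteIncidenceSet_adj.mp hz).1

lemma gdeg_deleteIncidenceSet_lt [Finite V] (h : G.Adj u w) :
    gdeg (G.deleteIncidenceSet w) u < gdeg G u :=
  Set.ncard_lt_ncard ⟨fun _ hz => (deleteIncidenceSet_adj.mp hz).1,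
    fun hsub => (deleteIncidenceSet_adj.mp (hsub h)).2.2 rfl⟩

lemma not_adj_of_gdeg_eq_zero [Finite V] (h : gdeg G u = 0) (z : V) : ¬ G.Adj u z := by
  rw [gdeg, Set.ncard_eq_zero] at h
  exact fun hz => (h ▸ hz : z ∈ (∅ : Set V))

lemma exists_mem_forall_adj_ne [Finite V] {s : Finset ℕ} (hw : gdeg G w < #s) (f : V → ℕ) :
    ∃ γ ∈ s, ∀ z, G.Adj w z → f z ≠ γ := by
  have hnsub : ¬ (s : Set ℕ) ⊆ f '' G.neighborSet w := fun hsub => by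
    have := (Set.ncard_le_ncard hsub).trans (Set.ncard_image_le (s := G.neighborSet w))
    rw [Set.ncard_coe_finset] at this
    exact absurd hw (not_lt.mpr this)
  obtain ⟨γ, hγ, hγf⟩ := Set.not_subset.mp hnsub
  exact ⟨γ, hγ, fun z hz hzγ => hγf ⟨z, hz, hzγ⟩⟩

/-- Without such a `γ`, `s ⊆ insert (f w) (f '' G.neighborSet w)`, and `gdeg G w < #s` forces
equality in every count. -/
lemma exists_free_or_injOn [Finite V] {s : Finset ℕ} (hw : gdeg G w < #s) (f : V → ℕ) {β : ℕ}
    (hβ : β ∈ f '' G.neighborSet w) :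
    (∃ γ ∈ s, γ ≠ f w ∧ γ ≠ β ∧ ∀ z, G.Adj w z → f z ≠ γ) ∨
      (β ∈ s ∧ Set.InjOn f (G.neighborSet w)) := by
  refine or_iff_not_imp_left.mpr fun hfree => ?_
  push Not at hfree
  have hsub : (s : Set ℕ) ⊆ insert (f w) (f '' G.neighborSet w) := by
    intro γ hγ
    by_cases hγw : γ = f w
    · exact Or.inl hγw
    by_cases hγβ : γ = β
    · exact Or.inr (hγβ ▸ hβ)
    obtain ⟨z, hz, hzγ⟩ := hfree γ hγ hγw hγβ
    exact Or.inr ⟨z, hz, hzγ⟩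
  have hinsert := Set.ncard_insert_le (f w) (f '' G.neighborSet w)
  have himage : (f '' G.neighborSet w).ncard ≤ gdeg G w := Set.ncard_image_le
  have hseq : (s : Set ℕ) = insert (f w) (f '' G.neighborSet w) :=
    Set.eq_of_subset_of_ncard_le hsub (by rw [Set.ncard_coe_finset]; omega)
  have hs : #s ≤ (f '' G.neighborSet w).ncard + 1 := by
    rw [← Set.ncard_coe_finset, hseq]; exact hinsert
  refine ⟨?_, Set.injOn_of_ncard_image_eq (by unfold gdeg at hw himage; omega)⟩
  rw [← Finset.mem_coe, hseq]
  exact Set.mem_insert_of_mem _ hβ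

end Degree

section Kempe

variable {V : Type*} {G : SimpleGraph V} {L : V → Finset ℕ} {φ : V → ℕ} {α β γ : ℕ} {x v : V}

lemma kempeGraph_comm (G : SimpleGraph V) (φ : V → ℕ) (α β : ℕ) :
    kempeGraph G φ α β = kempeGraph G φ β α := by
  ext u v
  exact and_congr_right fun _ => and_congr or_comm or_comm

lemma kempeGraph_le : kempeGraph G φ α β ≤ G := fun _ _ h => h.1

lemma kempeSwap_apply : kempeSwap G φ α β x v =
    if (kempeGraph G φ α β).Reachable x v then Equiv.swap α β (φ v) else φ v := by
  unfold kempeSwap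
  split_ifs <;> simp_all [Equiv.swap_apply_def]

lemma kempeSwap_comm : kempeSwap G φ α β x = kempeSwap G φ β α x := by
  funext v
  simp only [kempeSwap_apply, kempeGraph_comm G φ α β, Equiv.swap_comm]

lemma kempeSwap_of_not_reachable (h : ¬ (kempeGraph G φ α β).Reachable x v) :
    kempeSwap G φ α β x v = φ v := by
  rw [kempeSwap_apply, if_neg h]

lemma kempeSwap_ne_of_adj (hφ : ∀ ⦃u v : V⦄, G.Adj u v → φ u ≠ φ v) {u v : V} (h : G.Adj u v) :
    kempeSwap G φ α β x u ≠ kempeSwap G φ α β x v := by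
  have hborder : ∀ ⦃u v : V⦄, G.Adj u v → (kempeGraph G φ α β).Reachable x u →
      ¬ (kempeGraph G φ α β).Reachable x v → Equiv.swap α β (φ u) ≠ φ v := by
    intro u v huv hu hv heq
    rw [Equiv.swap_apply_def] at heq
    split_ifs at heq with hα hβ
    · exact hv (hu.trans (Adj.reachable ⟨huv, Or.inl hα, Or.inr heq.symm⟩))
    · exact hv (hu.trans (Adj.reachable ⟨huv, Or.inr hβ, Or.inl heq.symm⟩))
    · exact hφ huv heq
  rw [kempeSwap_apply, kempeSwap_apply]
  split_ifs with hu hv hv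
  · exact (Equiv.swap α β).injective.ne (hφ h)
  · exact hborder h hu hv
  · exact (hborder h.symm hv hu).symm
  · exact hφ h

/-- Recoloring a single vertex is a Kempe swap on a one-vertex component. -/
lemma kempeStep_update (hφ : IsLColoring G L φ) (hψ : IsLColoring G L (Function.update φ v γ)) :
    KempeStep G L φ (Function.update φ v γ) := by
  refine ⟨hφ, hψ, φ v, γ, v, funext fun u => ?_⟩
  have hiso : ∀ z, ¬ (kempeGraph G φ (φ v) γ).Adj v z := by
    rintro z ⟨hvz, -, hz | hz⟩
    · exact hφ.2 hvz hz.symm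
    · exact hψ.2 hvz (by simpa [hvz.ne'] using hz.symm)
  by_cases huv : u = v
  · subst huv
    simp [kempeSwap_apply]
  · rw [kempeSwap_of_not_reachable fun h => huv (eq_of_reachable_of_forall_not_adj hiso h),
      Function.update_of_ne huv]

end Kempe

section Lift

variable {V : Type*} {G : SimpleGraph V} {L : V → Finset ℕ} {w x : V} {θ σ : V → ℕ}
  {α β γ : ℕ}

lemma isLColoring_update (hσL : ∀ u ≠ w, σ u ∈ L u)
    (hσ : ∀ ⦃u v : V⦄, (G.deleteIncidenceSet w).Adj u v → σ u ≠ σ v) (hγ : γ ∈ L w)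
    (hfree : ∀ z, G.Adj w z → σ z ≠ γ) : IsLColoring G L (Function.update σ w γ) := by
  refine ⟨fun u => ?_, fun u v huv => ?_⟩
  · by_cases hu : u = w
    · subst hu
      simpa using hγ
    · simpa [hu] using hσL u hu
  · by_cases hu : u = w
    · subst hu
      simpa [huv.ne'] using (hfree v huv).symm
    by_cases hv : v = w
    · subst hv
      simpa [hu] using hfree u huv.symm
    · simpa [hu, hv] using hσ (deleteIncidenceSet_adj.mpr ⟨huv, hu, hv⟩)

lemma isLColoring_deleteIncidenceSet_update (hθ : IsLColoring G L θ) (c : ℕ) :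
    IsLColoring (G.deleteIncidenceSet w) (Function.update L w {c}) (Function.update θ w c) := by
  refine ⟨fun u => ?_, fun u v huv => ?_⟩
  · by_cases hu : u = w
    · subst hu
      simp
    · simpa [hu] using hθ.1 u
  · obtain ⟨huv, hu, hv⟩ := deleteIncidenceSet_adj.mp huv
    simpa [hu, hv] using hθ.2 huv

lemma kempeGraph_deleteIncidenceSet (hθσ : ∀ u ≠ w, θ u = σ u) :
    kempeGraph (G.deleteIncidenceSet w) σ α β = (kempeGraph G θ α β).deleteIncidenceSet w := by
  ext u v
  change (G.deleteIncidenceSet w).Adj u v ∧ _ ∧ _ ↔ _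
  rw [deleteIncidenceSet_adj, deleteIncidenceSet_adj]
  constructor
  · rintro ⟨⟨huv, hu, hv⟩, hcu, hcv⟩
    exact ⟨⟨huv, by rwa [hθσ u hu], by rwa [hθσ v hv]⟩, hu, hv⟩
  · rintro ⟨⟨huv, hcu, hcv⟩, hu, hv⟩
    exact ⟨⟨huv, hu, hv⟩, by rwa [← hθσ u hu], by rwa [← hθσ v hv]⟩

lemma kempeSwap_deleteIncidenceSet_eq (hθσ : ∀ u ≠ w, θ u = σ u) {u : V} (hu : u ≠ w)
    (h : (kempeGraph G θ α β).Reachable x u →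
      ((kempeGraph G θ α β).deleteIncidenceSet w).Reachable x u) :
    kempeSwap G θ α β x u = kempeSwap (G.deleteIncidenceSet w) σ α β x u := by
  have hiff : ((kempeGraph G θ α β).deleteIncidenceSet w).Reachable x u ↔
      (kempeGraph G θ α β).Reachable x u := ⟨fun h' => h'.mono (deleteIncidenceSet_le _ w), h⟩
  simp only [kempeSwap_apply, kempeGraph_deleteIncidenceSet hθσ, hiff, hθσ u hu]

lemma exists_kempeStep_of_reachable_deleteIncidenceSet (hθ : IsLColoring G L θ)
    (hθσ : ∀ u ≠ w, θ u = σ u)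
    (hσ' : ∀ u ≠ w, kempeSwap (G.deleteIncidenceSet w) σ α β x u ∈ L u)
    (hw : kempeSwap G θ α β x w ∈ L w)
    (hreach : ∀ u ≠ w, (kempeGraph G θ α β).Reachable x u →
      ((kempeGraph G θ α β).deleteIncidenceSet w).Reachable x u) :
    ∃ θ', LEquiv G L θ θ' ∧ IsLColoring G L θ' ∧
      ∀ u ≠ w, θ' u = kempeSwap (G.deleteIncidenceSet w) σ α β x u := by
  have hagree : ∀ u ≠ w, kempeSwap G θ α β x u = kempeSwap (G.deleteIncidenceSet w) σ α β x u :=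
    fun u hu => kempeSwap_deleteIncidenceSet_eq hθσ hu (hreach u hu)
  have hθ' : IsLColoring G L (kempeSwap G θ α β x) := by
    refine ⟨fun u => ?_, fun _ _ => kempeSwap_ne_of_adj hθ.2⟩
    by_cases hu : u = w
    · exact hu ▸ hw
    · exact hagree u hu ▸ hσ' u hu
  exact ⟨_, .single ⟨hθ, hθ', α, β, x, rfl⟩, hθ', hagree⟩

lemma exists_lEquiv_of_not_reachable (hθ : IsLColoring G L θ) (hθσ : ∀ u ≠ w, θ u = σ u)
    (hσ' : ∀ u ≠ w, kempeSwap (G.deleteIncidenceSet w) σ α β x u ∈ L u)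
    (hr : ¬ (kempeGraph G θ α β).Reachable x w) :
    ∃ θ', LEquiv G L θ θ' ∧ IsLColoring G L θ' ∧
      ∀ u ≠ w, θ' u = kempeSwap (G.deleteIncidenceSet w) σ α β x u :=
  exists_kempeStep_of_reachable_deleteIncidenceSet hθ hθσ hσ'
    (kempeSwap_of_not_reachable hr ▸ hθ.1 w)
    fun _ _ hxu => hxu.deleteIncidenceSet_of_not_reachable hr

lemma exists_lEquiv_of_reachable [Finite V] (hwL : gdeg G w < #(L w)) (hθ : IsLColoring G L θ)
    (hθσ : ∀ u ≠ w, θ u = σ u)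
    (hσ' : ∀ u ≠ w, kempeSwap (G.deleteIncidenceSet w) σ α β x u ∈ L u)
    (hxw : x ≠ w) (hwα : θ w = α) (hr : (kempeGraph G θ α β).Reachable x w) :
    ∃ θ', LEquiv G L θ θ' ∧ IsLColoring G L θ' ∧
      ∀ u ≠ w, θ' u = kempeSwap (G.deleteIncidenceSet w) σ α β x u := by
  have hnbr : ∀ z, (kempeGraph G θ α β).Adj w z → θ z = β := fun z ⟨hwz, _, hz⟩ =>
    hz.resolve_left fun h => hθ.2 hwz (hwα.trans h.symm)
  obtain ⟨z₀, hwz₀, -⟩ := hr.exists_adj_reachable_deleteIncidenceSet hxw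
  rcases exists_free_or_injOn hwL θ ⟨z₀, hwz₀.1, hnbr z₀ hwz₀⟩ with
    ⟨γ, hγL, hγα, hγβ, hfree⟩ | ⟨hβL, hinj⟩
  · -- recoloring `w` by `γ` first takes it out of every `α,β`-chain
    have hθ₂ : IsLColoring G L (Function.update θ w γ) :=
      isLColoring_update (fun u _ => hθ.1 u) (fun _ _ h => hθ.2 (deleteIncidenceSet_le G w h))
        hγL hfree
    have hr₂ : ¬ (kempeGraph G (Function.update θ w γ) α β).Reachable x w := fun h => by
      obtain ⟨z, ⟨-, hw, -⟩, -⟩ := h.exists_adj_reachable_deleteIncidenceSet hxw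
      simp only [Function.update_self] at hw
      exact hw.elim (fun h => hγα (hwα ▸ h)) hγβ
    obtain ⟨θ', hθ₂θ', hθ', hθ'σ⟩ := exists_lEquiv_of_not_reachable hθ₂
      (fun u hu => (Function.update_of_ne hu γ θ).trans (hθσ u hu)) hσ' hr₂
    exact ⟨θ', .head (kempeStep_update hθ hθ₂) hθ₂θ', hθ', hθ'σ⟩
  · -- `w` is a leaf of the `α,β`-graph, so cutting it out keeps the chain connected
    refine exists_kempeStep_of_reachable_deleteIncidenceSet hθ hθσ hσ' ?_
      fun u hu hxu => hxu.deleteIncidenceSet_of_neighborSet_subsingleton hxw hu ?_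
    · rwa [kempeSwap_apply, if_pos hr, hwα, Equiv.swap_apply_left]
    · exact fun z hz z' hz' => hinj hz.1 hz'.1 ((hnbr z hz).trans (hnbr z' hz').symm)

lemma exists_lEquiv_kempeSwap_deleteIncidenceSet [Finite V] (hwL : gdeg G w < #(L w))
    (hθ : IsLColoring G L θ) (hθσ : ∀ u ≠ w, θ u = σ u)
    (hσ' : ∀ u ≠ w, kempeSwap (G.deleteIncidenceSet w) σ α β x u ∈ L u) :
    ∃ θ', LEquiv G L θ θ' ∧ IsLColoring G L θ' ∧
      ∀ u ≠ w, θ' u = kempeSwap (G.deleteIncidenceSet w) σ α β x u := by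
  by_cases hxw : x = w
  · refine ⟨θ, .refl, hθ, fun u hu => ?_⟩
    rw [kempeSwap_of_not_reachable, hθσ u hu]
    exact fun h => hu (eq_of_reachable_deleteIncidenceSet (hxw ▸ h.mono kempeGraph_le))
  by_cases hr : (kempeGraph G θ α β).Reachable x w
  · obtain ⟨z, ⟨-, hwα | hwβ, -⟩, -⟩ := hr.exists_adj_reachable_deleteIncidenceSet hxw
    · exact exists_lEquiv_of_reachable hwL hθ hθσ hσ' hxw hwα hr
    · rw [kempeSwap_comm] at hσ' ⊢
      rw [kempeGraph_comm] at hr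
      exact exists_lEquiv_of_reachable hwL hθ hθσ hσ' hxw hwβ hr
  · exact exists_lEquiv_of_not_reachable hθ hθσ hσ' hr

lemma exists_lEquiv_of_lEquiv_deleteIncidenceSet [Finite V] (hwL : gdeg G w < #(L w))
    {L' : V → Finset ℕ} (hL' : ∀ u ≠ w, L' u = L u) {σ' : V → ℕ}
    (h : LEquiv (G.deleteIncidenceSet w) L' σ σ') (hθ : IsLColoring G L θ)
    (hθσ : ∀ u ≠ w, θ u = σ u) :
    ∃ θ', LEquiv G L θ θ' ∧ IsLColoring G L θ' ∧ ∀ u ≠ w, θ' u = σ' u := by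
  induction h with
  | refl => exact ⟨θ, .refl, hθ, hθσ⟩
  | tail _ hstep ih =>
    obtain ⟨θ₁, hθθ₁, hθ₁, hθ₁σ⟩ := ih
    obtain ⟨-, hσ', α, β, x, rfl⟩ := hstep
    obtain ⟨θ', hθ₁θ', hθ', hθ'σ⟩ :=
      exists_lEquiv_kempeSwap_deleteIncidenceSet hwL hθ₁ hθ₁σ fun u hu => hL' u hu ▸ hσ'.1 u
    exact ⟨θ', hθθ₁.trans hθ₁θ', hθ', hθ'σ⟩

theorem LSwappable.of_deleteIncidenceSet [Finite V] (hwL : gdeg G w < #(L w)) {c : ℕ}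
    (h : LSwappable (G.deleteIncidenceSet w) (Function.update L w {c})) : LSwappable G L := by
  have hL' : ∀ u ≠ w, Function.update L w {c} u = L u := fun u hu => Function.update_of_ne hu _ _
  obtain ⟨⟨σ, hσL, hσ⟩, hequiv⟩ := h
  refine ⟨?_, fun φ ψ hφ hψ => ?_⟩
  · obtain ⟨γ, hγ, hfree⟩ := exists_mem_forall_adj_ne hwL σ
    exact ⟨_, isLColoring_update (fun u hu => hL' u hu ▸ hσL u) hσ hγ hfree⟩
  obtain ⟨θ', hφθ', hθ', hθ'ψ⟩ := exists_lEquiv_of_lEquiv_deleteIncidenceSet hwL hL'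
    (hequiv _ _ (isLColoring_deleteIncidenceSet_update hφ c)
      (isLColoring_deleteIncidenceSet_update hψ c)) hφ
    fun u hu => (Function.update_of_ne hu c φ).symm
  have hψθ' : ψ = Function.update θ' w (ψ w) := funext fun u => by
    by_cases hu : u = w
    · subst hu
      simp
    · simp [hu, hθ'ψ u hu]
  have hstep := kempeStep_update hθ' (hψθ' ▸ hψ)
  rw [← hψθ'] at hstep
  exact hφθ'.tail hstep

end Lift

section Main

variable {V : Type*} {G : SimpleGraph V} {L : V → Finset ℕ}

lemma lSwappable_of_forall_not_adj_of_card_eq_one (hG : ∀ u v, ¬ G.Adj u v) (hL : ∀ v, #(L v) = 1) :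
    LSwappable G L := by
  choose f hf using fun v => Finset.card_eq_one.mp (hL v)
  refine ⟨⟨f, fun v => by simp [hf v], fun u v h => absurd h (hG u v)⟩, fun φ ψ hφ hψ => ?_⟩
  have hφψ : φ = ψ := funext fun v => by
    have hφv := hφ.1 v
    have hψv := hψ.1 v
    rw [hf v, mem_singleton] at hφv hψv
    rw [hφv, hψv]
  exact hφψ ▸ .refl

lemma gdeg_deleteIncidenceSet_le_card_update [Finite V] {w : V}
    (hdeg : ∀ v, gdeg G v ≤ #(L v)) (c : ℕ) (v : V) :
    gdeg (G.deleteIncidenceSet w) v ≤ #(Function.update L w {c} v) := by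
  by_cases hvw : v = w
  · rw [hvw, gdeg_deleteIncidenceSet_self]
    exact Nat.zero_le _
  · rw [Function.update_of_ne hvw]
    exact gdeg_deleteIncidenceSet_le.trans (hdeg v)

/-- The former neighbours of `w` gain slack, and every walk to a slack vertex through `w` reaches
one of them first. -/
lemma exists_reachable_slack_deleteIncidenceSet [Finite V] {w : V}
    (hdeg : ∀ v, gdeg G v ≤ #(L v)) (hslack : ∀ v, ∃ z, G.Reachable v z ∧ gdeg G z < #(L z))
    (c : ℕ) (v : V) :
    ∃ z, (G.deleteIncidenceSet w).Reachable v z ∧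
      gdeg (G.deleteIncidenceSet w) z < #(Function.update L w {c} z) := by
  have hslack' : ∀ z, gdeg G z < #(L z) →
      gdeg (G.deleteIncidenceSet w) z < #(Function.update L w {c} z) := by
    intro z hz
    by_cases hzw : z = w
    · simp [hzw, gdeg_deleteIncidenceSet_self]
    · rw [Function.update_of_ne hzw]
      exact gdeg_deleteIncidenceSet_le.trans_lt hz
  by_cases hvw : v = w
  · exact ⟨v, .rfl, by simp [hvw, gdeg_deleteIncidenceSet_self]⟩
  obtain ⟨z, hvz, hz⟩ := hslack v
  rcases hvz.deleteIncidenceSet_or_exists_adj hvw with hvz' | ⟨p, hwp, hvp⟩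
  · exact ⟨z, hvz', hslack' z hz⟩
  · refine ⟨p, hvp, ?_⟩
    rw [Function.update_of_ne hwp.ne']
    exact (gdeg_deleteIncidenceSet_lt hwp.symm).trans_le (hdeg p)

theorem lSwappable_of_forall_reachable_slack [Fintype V] (hdeg : ∀ v, gdeg G v ≤ #(L v))
    (hslack : ∀ v, ∃ z, G.Reachable v z ∧ gdeg G z < #(L z)) : LSwappable G L := by
  induction hn : ∑ v, #(L v) using Nat.strong_induction_on generalizing G L with
  | _ n ih =>
  by_cases hbig : ∃ w, gdeg G w < #(L w) ∧ 2 ≤ #(L w)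
  · obtain ⟨w, hwL, hw2⟩ := hbig
    refine LSwappable.of_deleteIncidenceSet hwL (ih _ ?_ (L := Function.update L w {0})
      (gdeg_deleteIncidenceSet_le_card_update hdeg 0)
      (exists_reachable_slack_deleteIncidenceSet hdeg hslack 0) rfl)
    rw [← hn]
    refine Finset.sum_lt_sum (fun u _ => ?_)
      ⟨w, mem_univ w, by simp only [Function.update_self, card_singleton]; omega⟩
    by_cases hu : u = w
    · simp only [hu, Function.update_self, card_singleton]
      omega
    · rw [Function.update_of_ne hu]
  · push Not at hbig
    have hiso : ∀ v, (∀ z, ¬ G.Adj v z) ∧ #(L v) = 1 := by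
      intro v
      obtain ⟨z, hvz, hz⟩ := hslack v
      have hz0 : gdeg G z = 0 := by
        have := hbig z hz
        omega
      obtain rfl := eq_of_reachable_of_forall_not_adj (not_adj_of_gdeg_eq_zero hz0) hvz.symm
      exact ⟨not_adj_of_gdeg_eq_zero hz0, by have := hbig v hz; omega⟩
    exact lSwappable_of_forall_not_adj_of_card_eq_one (fun u => (hiso u).1) fun v => (hiso v).2

end Main

/-- **Lemma.** If `G` is connected, `|L(v)| ≥ deg_G(v)` for every vertex `v`, and
`|L(w)| > deg_G(w)` for some vertex `w`, then `G` is `L`-swappable. -/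
theorem stmt_5 {V : Type*} [Fintype V] (G : SimpleGraph V)
    (hconn : G.Connected) (L : V → Finset ℕ)
    (h1 : ∀ v, gdeg G v ≤ (L v).card)
    (h2 : ∃ w, gdeg G w < (L w).card) :
    LSwappable G L := by
  obtain ⟨w, hw⟩ := h2
  exact lSwappable_of_forall_reachable_slack h1 fun v => ⟨w, hconn.preconnected v w, hw⟩
end

section
/- Let G be the complete graph K_{k+1} with k ≥ 3, and let L be a k-assignment for G. If there exist vertices v and w with L(v) ≠ L(w), then G is L-swappable. -/
open SimpleGraph
open scoped Classical

/-!
On `K_{k+1}` an `L`-coloring is an injective choice from the lists, and a Kempe swap either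
recolors one vertex with an unused color of its list or exchanges the colors of two vertices that
accept each other's colors. Every Kempe swap is undone by the same swap, so it suffices to move one
of two colorings `σ ≠ τ` until they disagree on fewer vertices. The basic moves fail from both
sides only when `τ` rotates the `σ`-colors of a triangle `u, b, a` whose lists contain the
`σ`-color of every vertex outside it. A fourth vertex `y` has `k` colors in its list, so it has an
unused color or accepts a color of the triangle; either way `a` can take the color of `y`, after
which two swaps settle `u` and `a` at the cost of `y`. A coloring exists by Hall's theorem: two
different `k`-lists have at least `k + 1` colors together.
-/

section Reversibility
variable {V : Type*} {G : SimpleGraph V} {L : V → Finset ℕ}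

lemma kempeSwap_eq_or_eq_iff (φ : V → ℕ) (α β : ℕ) (x v : V) :
    (kempeSwap G φ α β x v = α ∨ kempeSwap G φ α β x v = β) ↔ (φ v = α ∨ φ v = β) := by
  unfold kempeSwap
  split_ifs <;> aesop

lemma kempeGraph_kempeSwap (φ : V → ℕ) (α β : ℕ) (x : V) :
    kempeGraph G (kempeSwap G φ α β x) α β = kempeGraph G φ α β := by
  ext
  simp only [kempeGraph, kempeSwap_eq_or_eq_iff]

lemma kempeSwap_kempeSwap (φ : V → ℕ) (α β : ℕ) (x : V) :
    kempeSwap G (kempeSwap G φ α β x) α β x = φ := by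
  funext v
  rw [kempeSwap, kempeGraph_kempeSwap]
  simp only [kempeSwap]
  split_ifs <;> grind

lemma KempeStep.symm {φ ψ : V → ℕ} (h : KempeStep G L φ ψ) : KempeStep G L ψ φ := by
  obtain ⟨hφ, hψ, α, β, x, rfl⟩ := h
  exact ⟨hψ, hφ, α, β, x, (kempeSwap_kempeSwap φ α β x).symm⟩

lemma LEquiv.symm {φ ψ : V → ℕ} (h : LEquiv G L φ ψ) : LEquiv G L ψ φ := by
  induction h with
  | refl => exact .refl
  | tail _ hstep ih => exact ih.head hstep.symm

lemma LEquiv.trans {φ ψ χ : V → ℕ} (h₁ : LEquiv G L φ ψ) (h₂ : LEquiv G L ψ χ) :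
    LEquiv G L φ χ :=
  Relation.ReflTransGen.trans h₁ h₂

lemma LEquiv.isLColoring {φ ψ : V → ℕ} (h : LEquiv G L φ ψ) (hφ : IsLColoring G L φ) :
    IsLColoring G L ψ := by
  induction h with
  | refl => exact hφ
  | tail _ hstep _ => exact hstep.2.1

end Reversibility

section CompleteGraph
variable {V : Type*} {L : V → Finset ℕ} {φ : V → ℕ}

lemma isLColoring_top_iff :
    IsLColoring (⊤ : SimpleGraph V) L φ ↔ (∀ v, φ v ∈ L v) ∧ Function.Injective φ := by
  refine and_congr_right fun _ => ⟨fun h a b hab => ?_, fun h a b hab hφ => hab (h hφ)⟩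
  by_contra hne
  exact h ((top_adj a b).2 hne) hab

variable [DecidableEq V]

lemma kempeSwap_top_eq_comp_swap (hφ : Function.Injective φ) {a b : V} (hab : a ≠ b) :
    kempeSwap ⊤ φ (φ a) (φ b) a = φ ∘ Equiv.swap a b := by
  have hreach : (kempeGraph ⊤ φ (φ a) (φ b)).Reachable a b :=
    Adj.reachable ⟨(top_adj a b).2 hab, Or.inl rfl, Or.inr rfl⟩
  funext v
  simp only [kempeSwap, Function.comp_apply, Equiv.swap_apply_def, hφ.eq_iff]
  split_ifs <;> simp_all

lemma kempeSwap_top_eq_update (hφ : Function.Injective φ) (a : V) {c : ℕ}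
    (hc : ∀ v, φ v ≠ c) :
    kempeSwap ⊤ φ (φ a) c a = Function.update φ a c := by
  funext v
  simp only [kempeSwap, Function.update_apply, hφ.eq_iff]
  split_ifs <;> simp_all

lemma IsLColoring.comp_swap (hφ : IsLColoring ⊤ L φ) {a b : V} (ha : φ b ∈ L a)
    (hb : φ a ∈ L b) : IsLColoring ⊤ L (φ ∘ Equiv.swap a b) := by
  obtain ⟨hmem, hinj⟩ := isLColoring_top_iff.1 hφ
  refine isLColoring_top_iff.2 ⟨fun v => ?_, hinj.comp (Equiv.injective _)⟩
  simp only [Function.comp_apply, Equiv.swap_apply_def]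
  split_ifs with hva hvb
  · exact hva ▸ ha
  · exact hvb ▸ hb
  · exact hmem v

lemma IsLColoring.update (hφ : IsLColoring ⊤ L φ) {a : V} {c : ℕ} (hca : c ∈ L a)
    (hc : ∀ v, φ v ≠ c) : IsLColoring ⊤ L (Function.update φ a c) := by
  obtain ⟨hmem, hinj⟩ := isLColoring_top_iff.1 hφ
  refine isLColoring_top_iff.2 ⟨fun v => ?_, fun v w hvw => ?_⟩
  · rcases eq_or_ne v a with rfl | hva
    · simpa using hca
    · simpa [hva] using hmem v
  · simp only [Function.update_apply] at hvw
    split_ifs at hvw <;> grind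

lemma lEquiv_comp_swap (hφ : IsLColoring ⊤ L φ) {a b : V} (ha : φ b ∈ L a)
    (hb : φ a ∈ L b) : LEquiv ⊤ L φ (φ ∘ Equiv.swap a b) := by
  rcases eq_or_ne a b with rfl | hab
  · rw [Equiv.swap_self, Equiv.coe_refl, Function.comp_id]
    exact .refl
  refine .single ⟨hφ, hφ.comp_swap ha hb, φ a, φ b, a, ?_⟩
  rw [kempeSwap_top_eq_comp_swap (isLColoring_top_iff.1 hφ).2 hab]

lemma lEquiv_update (hφ : IsLColoring ⊤ L φ) {a : V} {c : ℕ} (hca : c ∈ L a)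
    (hc : ∀ v, φ v ≠ c) : LEquiv ⊤ L φ (Function.update φ a c) :=
  .single ⟨hφ, hφ.update hca hc, φ a, c, a,
    (kempeSwap_top_eq_update (isLColoring_top_iff.1 hφ).2 a hc).symm⟩

end CompleteGraph

section Disagreement
open Finset
variable {V : Type*} [Fintype V] {L : V → Finset ℕ} {σ τ : V → ℕ}

def disagreement (σ τ : V → ℕ) : Finset V := univ.filter fun v => σ v ≠ τ v

lemma mem_disagreement {v : V} : v ∈ disagreement σ τ ↔ σ v ≠ τ v := by
  simp [disagreement]

lemma disagreement_comm : disagreement σ τ = disagreement τ σ := by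
  ext v
  simp only [mem_disagreement, ne_comm]

variable (L) in
def KempeCloser (σ τ : V → ℕ) : Prop :=
  ∃ σ', LEquiv ⊤ L σ σ' ∧ #(disagreement σ' τ) < #(disagreement σ τ)

variable [DecidableEq V]

lemma KempeCloser.of_agree {σ' : V → ℕ} (h : LEquiv ⊤ L σ σ') {t : V} (ht : σ t ≠ τ t)
    (hσ' : ∀ v, σ' v ≠ τ v → v ≠ t ∧ σ v ≠ τ v) : KempeCloser L σ τ := by
  refine ⟨σ', h, lt_of_le_of_lt (card_le_card fun v hv => ?_)
    (card_erase_lt_of_mem (mem_disagreement.2 ht))⟩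
  obtain ⟨hvt, hv⟩ := hσ' v (mem_disagreement.1 hv)
  exact mem_erase.2 ⟨hvt, mem_disagreement.2 hv⟩

lemma KempeCloser.of_agree₂ {σ' : V → ℕ} (h : LEquiv ⊤ L σ σ') {p q y : V} (hpq : p ≠ q)
    (hp : σ p ≠ τ p) (hq : σ q ≠ τ q)
    (hσ' : ∀ v, σ' v ≠ τ v → v = y ∨ v ≠ p ∧ v ≠ q ∧ σ v ≠ τ v) : KempeCloser L σ τ := by
  set D := disagreement σ τ
  have hqD : q ∈ D.erase p := mem_erase.2 ⟨hpq.symm, mem_disagreement.2 hq⟩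
  have hsub : disagreement σ' τ ⊆ insert y ((D.erase p).erase q) := by
    intro v hv
    rcases hσ' v (mem_disagreement.1 hv) with rfl | ⟨hvp, hvq, hv⟩
    · exact mem_insert_self _ _
    · exact mem_insert_of_mem (mem_erase.2 ⟨hvq, mem_erase.2 ⟨hvp, mem_disagreement.2 hv⟩⟩)
  have hcard := (card_le_card hsub).trans (card_insert_le _ _)
  rw [card_erase_of_mem hqD, card_erase_of_mem (mem_disagreement.2 hp)] at hcard
  have := card_pos.2 ⟨q, hqD⟩
  rw [card_erase_of_mem (mem_disagreement.2 hp)] at this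
  exact ⟨σ', h, by omega⟩

variable (hσ : IsLColoring ⊤ L σ) (hτ : IsLColoring ⊤ L τ)
include hσ hτ

lemma kempeCloser_of_forall_ne {t : V} (ht : σ t ≠ τ t) (hfree : ∀ v, σ v ≠ τ t) :
    KempeCloser L σ τ := by
  refine .of_agree (lEquiv_update hσ (hτ.1 t) hfree) ht fun v hv => ?_
  rcases eq_or_ne v t with rfl | hvt
  · simp at hv
  · exact ⟨hvt, by simpa [hvt] using hv⟩

lemma kempeCloser_of_swap {t h : V} (ht : σ t ≠ τ t) (hh : σ h = τ t) (hth : σ t ∈ L h) :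
    KempeCloser L σ τ := by
  have hτinj := (isLColoring_top_iff.1 hτ).2
  refine .of_agree (lEquiv_comp_swap hσ (by rw [hh]; exact hτ.1 t) hth) ht fun v hv => ?_
  simp only [Function.comp_apply, Equiv.swap_apply_def] at hv
  split_ifs at hv with hvt hvh
  · exact absurd (hvt ▸ hh) hv
  · subst hvh
    exact ⟨fun h => ht (h ▸ hh), fun h => hvt (hτinj (h.symm.trans hh))⟩
  · exact ⟨hvt, hv⟩

lemma kempeCloser_of_free {t h : V} (ht : σ t ≠ τ t) (hh : σ h = τ t) {d : ℕ} (hd : d ∈ L h)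
    (hfree : ∀ v, σ v ≠ d) : KempeCloser L σ τ := by
  have hσinj := (isLColoring_top_iff.1 hσ).2
  have hτinj := (isLColoring_top_iff.1 hτ).2
  have hfree' : ∀ v, Function.update σ h d v ≠ τ t := by
    intro v
    rcases eq_or_ne v h with rfl | hvh
    · simpa [← hh] using (hfree v).symm
    · simp [hvh, ← hh, hσinj.eq_iff]
  have hequiv := (lEquiv_update hσ hd hfree).trans
    (lEquiv_update (hσ.update hd hfree) (hτ.1 t) hfree')
  refine .of_agree hequiv ht fun v hv => ?_
  rcases eq_or_ne v t with rfl | hvt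
  · simp at hv
  refine ⟨hvt, fun hσv => ?_⟩
  rcases eq_or_ne v h with rfl | hvh
  · exact hvt (hτinj (hσv.symm.trans hh))
  · simp [hvt, hvh, hσv] at hv

end Disagreement

open Finset in
lemma mem_of_subset_image_of_notMem {V : Type*} [Fintype V] {σ : V → ℕ} {k : ℕ}
    (hV : Fintype.card V = k + 1) {s : Finset ℕ} (hs : #s = k) (hinj : Function.Injective σ)
    (hsub : s ⊆ univ.image σ) {m : V} (hm : σ m ∉ s) {w : V} (hw : w ≠ m) : σ w ∈ s := by
  have hsub' : s ⊆ (univ.image σ).erase (σ m) := fun d hd =>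
    mem_erase.2 ⟨fun h => hm (h ▸ hd), hsub hd⟩
  have heq := eq_of_subset_of_card_le hsub' (by
    rw [card_erase_of_mem (mem_image_of_mem σ (mem_univ m)), card_image_of_injective _ hinj,
      card_univ, hV, hs]
    rfl)
  rw [heq]
  exact mem_erase.2 ⟨hinj.ne hw, mem_image_of_mem σ (mem_univ w)⟩

section Stuck
open Finset
variable {V : Type*} [Fintype V] [DecidableEq V] {L : V → Finset ℕ} {σ τ : V → ℕ}
  (hσ : IsLColoring ⊤ L σ) (hτ : IsLColoring ⊤ L τ)
include hσ hτ

lemma subset_image_of_not_kempeCloser (hnot : ¬ KempeCloser L σ τ) {t h : V} (ht : σ t ≠ τ t)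
    (hh : σ h = τ t) : L h ⊆ univ.image σ := by
  intro d hd
  by_contra hdσ
  exact hnot (kempeCloser_of_free hσ hτ ht hh hd fun v hv =>
    hdσ (hv ▸ mem_image_of_mem σ (mem_univ v)))

lemma forall_mem_of_not_kempeCloser {k : ℕ} (hV : Fintype.card V = k + 1)
    (hL : ∀ v, #(L v) = k) (hnot : ¬ KempeCloser L σ τ) {t h : V} (ht : σ t ≠ τ t)
    (hh : σ h = τ t) {w : V} (hw : w ≠ t) : σ w ∈ L h :=
  mem_of_subset_image_of_notMem hV (hL h) (isLColoring_top_iff.1 hσ).2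
    (subset_image_of_not_kempeCloser hσ hτ hnot ht hh)
    (fun hth => hnot (kempeCloser_of_swap hσ hτ ht hh hth)) hw

end Stuck

section Triangle
open Finset
variable {V : Type*} {L : V → Finset ℕ} {σ τ : V → ℕ}

/-- The configuration forced at a disagreement when neither coloring can be moved closer to the
other by one of the basic moves. -/
structure KempeTriangle (L : V → Finset ℕ) (σ τ : V → ℕ) (p q r : V) : Prop where
  ne_pq : p ≠ q
  ne_qr : q ≠ r
  ne_rp : r ≠ p
  apply_p : τ p = σ q
  apply_q : τ q = σ r
  apply_r : τ r = σ p
  mem : ∀ y, y ≠ p → y ≠ q → y ≠ r → σ y ∈ L p ∧ σ y ∈ L q ∧ σ y ∈ L r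

lemma KempeTriangle.rotate {p q r : V} (T : KempeTriangle L σ τ p q r) :
    KempeTriangle L σ τ q r p where
  ne_pq := T.ne_qr
  ne_qr := T.ne_rp
  ne_rp := T.ne_pq
  apply_p := T.apply_q
  apply_q := T.apply_r
  apply_r := T.apply_p
  mem y hq hr hp := by
    obtain ⟨h₁, h₂, h₃⟩ := T.mem y hp hq hr
    exact ⟨h₂, h₃, h₁⟩

variable [Fintype V] [DecidableEq V] (hσ : IsLColoring ⊤ L σ) (hτ : IsLColoring ⊤ L τ)
include hσ hτ

/-- Once `r` carries the color of a vertex `y` outside the triangle, two swaps give `p` and `r`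
their `τ`-colors; only `y` may end up worse off. -/
lemma KempeTriangle.kempeCloser_of_lEquiv {p q r : V} (T : KempeTriangle L σ τ p q r) {y : V}
    (hyp : y ≠ p) (hyq : y ≠ q) (hyr : y ≠ r) {σ₁ : V → ℕ} (h₁ : LEquiv ⊤ L σ σ₁)
    (hr₁ : σ₁ r = σ y) (hσ₁ : ∀ v, v ≠ y → v ≠ r → σ₁ v = σ v) : KempeCloser L σ τ := by
  have hσinj := (isLColoring_top_iff.1 hσ).2
  obtain ⟨hyLp, hyLq, -⟩ := T.mem y hyp hyq hyr
  have hp₁ : σ₁ p = τ r := by rw [hσ₁ p hyp.symm T.ne_rp.symm, T.apply_r]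
  have hq₁ : σ₁ q = τ p := by rw [hσ₁ q hyq.symm T.ne_qr, T.apply_p]
  have hσ₁col := h₁.isLColoring hσ
  have h₂ := h₁.trans (lEquiv_comp_swap hσ₁col (a := p) (b := r) (by rwa [hr₁])
    (by rw [hp₁]; exact hτ.1 r))
  have h₃ := h₂.trans (lEquiv_comp_swap (h₂.isLColoring hσ) (a := p) (b := q)
    (by simp [Equiv.swap_apply_of_ne_of_ne T.ne_pq.symm T.ne_qr, hq₁, hτ.1 p])
    (by simp [hr₁, hyLq]))
  refine .of_agree₂ (y := y) h₃ T.ne_rp.symm (by rw [T.apply_p]; exact hσinj.ne T.ne_pq)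
    (by rw [T.apply_r]; exact hσinj.ne T.ne_rp) fun v hv => ?_
  rcases eq_or_ne v y with rfl | hvy
  · exact .inl rfl
  refine .inr ?_
  rcases eq_or_ne v p with rfl | hvp
  · simp [Equiv.swap_apply_of_ne_of_ne T.ne_pq.symm T.ne_qr, hq₁] at hv
  rcases eq_or_ne v r with rfl | hvr
  · simp [Equiv.swap_apply_of_ne_of_ne hvp T.ne_qr.symm, hp₁] at hv
  refine ⟨hvp, hvr, ?_⟩
  rcases eq_or_ne v q with rfl | hvq
  · rw [T.apply_q]; exact hσinj.ne T.ne_qr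
  · simpa [Equiv.swap_apply_of_ne_of_ne hvp hvq, Equiv.swap_apply_of_ne_of_ne hvp hvr,
      hσ₁ v hvy hvr] using hv

lemma KempeTriangle.kempeCloser_of_mem {p q r : V} (T : KempeTriangle L σ τ p q r) {y : V}
    (hyp : y ≠ p) (hyq : y ≠ q) (hyr : y ≠ r) (hy : σ r ∈ L y) : KempeCloser L σ τ :=
  T.kempeCloser_of_lEquiv hσ hτ hyp hyq hyr (lEquiv_comp_swap hσ hy (T.mem y hyp hyq hyr).2.2)
    (by simp) fun v hvy hvr => by simp [Equiv.swap_apply_of_ne_of_ne hvy hvr]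

lemma KempeTriangle.kempeCloser_of_free {p q r : V} (T : KempeTriangle L σ τ p q r) {y : V}
    (hyp : y ≠ p) (hyq : y ≠ q) (hyr : y ≠ r) {γ : ℕ} (hγ : γ ∈ L y) (hfree : ∀ v, σ v ≠ γ) :
    KempeCloser L σ τ := by
  have hfree' : ∀ v, Function.update σ y γ v ≠ σ y := by
    intro v
    rcases eq_or_ne v y with rfl | hvy
    · simpa using (hfree v).symm
    · simpa [hvy] using (isLColoring_top_iff.1 hσ).2.ne hvy
  refine T.kempeCloser_of_lEquiv hσ hτ hyp hyq hyr ((lEquiv_update hσ hγ hfree).trans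
    (lEquiv_update (hσ.update hγ hfree) (T.mem y hyp hyq hyr).2.2 hfree')) (by simp)
    fun v hvy hvr => by simp [hvy, hvr]

lemma KempeTriangle.kempeCloser {k : ℕ} (hk : 3 ≤ k) (hV : Fintype.card V = k + 1)
    (hL : ∀ v, #(L v) = k) {p q r : V} (T : KempeTriangle L σ τ p q r) :
    KempeCloser L σ τ := by
  set S : Finset V := {p, q, r}ᶜ
  have hS : #S = k - 2 := by
    rw [card_compl, hV, card_eq_three.2 ⟨p, q, r, T.ne_pq, T.ne_rp.symm, T.ne_qr, rfl⟩]
    omega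
  obtain ⟨y, hy⟩ := card_pos.1 (show 0 < #S by omega)
  simp only [S, mem_compl, mem_insert, mem_singleton, not_or] at hy
  obtain ⟨hyp, hyq, hyr⟩ := hy
  by_cases hfree : ∃ γ ∈ L y, ∀ v, σ v ≠ γ
  · obtain ⟨γ, hγ, hfree⟩ := hfree
    exact T.kempeCloser_of_free hσ hτ hyp hyq hyr hγ hfree
  push Not at hfree
  by_cases hr : σ r ∈ L y
  · exact T.kempeCloser_of_mem hσ hτ hyp hyq hyr hr
  by_cases hp : σ p ∈ L y
  · exact T.rotate.kempeCloser_of_mem hσ hτ hyq hyr hyp hp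
  by_cases hq : σ q ∈ L y
  · exact T.rotate.rotate.kempeCloser_of_mem hσ hτ hyr hyp hyq hq
  -- `L y` consists of colors used by `σ` outside the triangle, too few for a `k`-list
  have hsub : L y ⊆ S.image σ := by
    intro γ hγ
    obtain ⟨v, rfl⟩ := hfree γ hγ
    refine mem_image_of_mem σ ?_
    simp only [S, mem_compl, mem_insert, mem_singleton, not_or]
    refine ⟨?_, ?_, ?_⟩ <;> rintro rfl <;> contradiction
  have := (card_le_card hsub).trans card_image_le
  have := hL y
  omega

end Triangle

section Connectivity
open Finset
variable {V : Type*} [Fintype V] [DecidableEq V] {L : V → Finset ℕ} {σ τ : V → ℕ} {k : ℕ}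
  (hσ : IsLColoring ⊤ L σ) (hτ : IsLColoring ⊤ L τ)
include hσ hτ

lemma exists_kempeTriangle (hV : Fintype.card V = k + 1) (hL : ∀ v, #(L v) = k)
    (h₁ : ¬ KempeCloser L σ τ) (h₂ : ¬ KempeCloser L τ σ) {u : V} (hu : σ u ≠ τ u) :
    ∃ b a, KempeTriangle L σ τ u b a := by
  have hσinj := (isLColoring_top_iff.1 hσ).2
  have hτinj := (isLColoring_top_iff.1 hτ).2
  obtain ⟨b, hb⟩ : ∃ b, σ b = τ u := by
    by_contra! h
    exact h₁ (kempeCloser_of_forall_ne hσ hτ hu h)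
  obtain ⟨a, ha⟩ : ∃ a, τ a = σ u := by
    by_contra! h
    exact h₂ (kempeCloser_of_forall_ne hτ hσ hu.symm h)
  have hub : u ≠ b := by rintro rfl; exact hu hb
  have hau : a ≠ u := by rintro rfl; exact hu ha.symm
  have haD : σ a ≠ τ a := ha ▸ hσinj.ne hau
  have hbD : σ b ≠ τ b := hb ▸ hτinj.ne hub
  have hLb : ∀ w, w ≠ u → σ w ∈ L b := fun w =>
    forall_mem_of_not_kempeCloser hσ hτ hV hL h₁ hu hb
  have hLu : ∀ w, w ≠ a → σ w ∈ L u := fun w =>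
    forall_mem_of_not_kempeCloser hσ hτ hV hL h₁ haD ha.symm
  have hLa : ∀ w, w ≠ u → τ w ∈ L a := fun w =>
    forall_mem_of_not_kempeCloser hτ hσ hV hL h₂ hu.symm ha
  have hτb : τ b = σ a := by
    obtain ⟨w, hw⟩ : ∃ w, τ w = σ a := by
      by_contra! h
      exact h₂ (kempeCloser_of_forall_ne hτ hσ haD.symm h)
    rcases eq_or_ne w b with rfl | hwb
    · exact hw
    · exact absurd (hw ▸ forall_mem_of_not_kempeCloser hτ hσ hV hL h₂ hbD.symm hb.symm hwb)
        fun h => h₁ (kempeCloser_of_swap hσ hτ haD ha.symm h)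
  have hba : b ≠ a := by rintro rfl; exact hbD hτb.symm
  refine ⟨b, a, hub, hba, hau, hb.symm, hτb, ha, fun y hyu hyb hya => ⟨hLu y hya, hLb y hyu, ?_⟩⟩
  obtain ⟨w, -, hw⟩ := mem_image.1
    (subset_image_of_not_kempeCloser hτ hσ h₂ hbD.symm hb.symm (hLu y hya))
  have hwu : w ≠ u := by rintro rfl; exact hyb (hσinj (hb.trans hw).symm)
  exact hw ▸ hLa w hwu

lemma kempeCloser_or_kempeCloser (hk : 3 ≤ k) (hV : Fintype.card V = k + 1)
    (hL : ∀ v, #(L v) = k) (hne : σ ≠ τ) : KempeCloser L σ τ ∨ KempeCloser L τ σ := by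
  obtain ⟨u, hu⟩ := Function.ne_iff.1 hne
  by_contra! h
  obtain ⟨b, a, T⟩ := exists_kempeTriangle hσ hτ hV hL h.1 h.2 hu
  exact h.1 (T.kempeCloser hσ hτ hk hV hL)

theorem lEquiv_of_isLColoring (hk : 3 ≤ k) (hV : Fintype.card V = k + 1)
    (hL : ∀ v, #(L v) = k) : LEquiv ⊤ L σ τ := by
  induction hD : #(disagreement σ τ) using Nat.strong_induction_on generalizing σ τ with
  | _ n ih =>
  rcases eq_or_ne σ τ with rfl | hne
  · exact .refl
  rcases kempeCloser_or_kempeCloser hσ hτ hk hV hL hne with ⟨σ', h, hlt⟩ | ⟨τ', h, hlt⟩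
  · exact h.trans (ih _ (hD ▸ hlt) (h.isLColoring hσ) hτ rfl)
  · rw [disagreement_comm, disagreement_comm (σ := τ)] at hlt
    exact (ih _ (hD ▸ hlt) hσ (h.isLColoring hτ) rfl).trans h.symm

end Connectivity

open Finset in
theorem exists_isLColoring_top {V : Type*} [Fintype V] {k : ℕ} (hV : Fintype.card V = k + 1)
    {L : V → Finset ℕ} (hL : ∀ v, #(L v) = k) {v w : V} (hvw : L v ≠ L w) :
    ∃ φ, IsLColoring ⊤ L φ := by
  have hall : ∀ s : Finset V, #s ≤ #(s.biUnion L) := by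
    intro s
    rcases s.eq_empty_or_nonempty with rfl | ⟨x, hx⟩
    · simp
    rcases eq_or_ne s univ with rfl | hs
    · have hunion : k < #(L v ∪ L w) := by
        by_contra! h
        exact hvw ((eq_of_subset_of_card_le subset_union_left (by rwa [hL])).trans
          (eq_of_subset_of_card_le subset_union_right (by rwa [hL])).symm)
      calc #(univ : Finset V) = k + 1 := by rw [card_univ, hV]
        _ ≤ #(L v ∪ L w) := hunion
        _ ≤ _ := card_le_card (union_subset (subset_biUnion_of_mem L (mem_univ v))
            (subset_biUnion_of_mem L (mem_univ w)))
    · calc #s ≤ k := by have := (card_lt_iff_ne_univ s).2 hs; omega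
        _ = #(L x) := (hL x).symm
        _ ≤ _ := card_le_card (subset_biUnion_of_mem L hx)
  obtain ⟨φ, hinj, hmem⟩ := (all_card_le_biUnion_card_iff_exists_injective L).1 hall
  exact ⟨φ, isLColoring_top_iff.2 ⟨hmem, hinj⟩⟩

/-- **Lemma.** Let `G = K_{k+1}` with `k ≥ 3` and let `L` be a `k`-assignment.  If
`L(v) ≠ L(w)` for some vertices `v, w`, then `G` is `L`-swappable. -/
theorem stmt_18 (k : ℕ) (hk : 3 ≤ k)
    (L : Fin (k + 1) → Finset ℕ) (hL : ∀ v, (L v).card = k)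
    (v w : Fin (k + 1)) (hvw : L v ≠ L w) :
    LSwappable (⊤ : SimpleGraph (Fin (k + 1))) L := by
  have hV : Fintype.card (Fin (k + 1)) = k + 1 := Fintype.card_fin _
  exact ⟨exists_isLColoring_top hV hL hvw,
    fun _ _ hφ hψ => lEquiv_of_isLColoring hφ hψ hk hV hL⟩
end
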